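/- arXiv:1505.02934 — 5 statements merged into one kernel-verified Lean document; each statement's English description precedes it below -/
import Mathlib

section
/- Let (Ω, μ) be a probability space and let υ : ℤ → Ω → ℝ be a family of square-integrable random variables with E[υ(k)] = 0, E[υ(k)²] = 1, and E[υ(k)·υ(j)] = 0 for k ≠ j. Let M be a positive integer, let h_1, …, h_M : ℤ → ℝ be finitely supported filters, and let I : ℤ → {1,…,M} be an arbitrary (periodic) interval-selection function. Define ε_i(n) := Σ_{l ∈ ℤ} h_i(n − l)·υ(l) (a finite sum) and the noise process w(n) := ε_{I(n)}(n). Then for all n, l ∈ ℤ the autocorrelation of w satisfies E[w(n+l)·w(n)] = Σ_{m ∈ ℤ} h_{I(n+l)}(m) · h_{I(n)}(m − l). -/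
open MeasureTheory

set_option autoImplicit false

/-! Each `w n` is a finite linear combination of the orthonormal family `υ` in `L²(μ)`, so the
correlation of two of them is the `ℓ²` pairing of their coefficient sequences; the substitution
`m = n + l - k` turns that pairing into the stated sum. -/

section Orthonormal

variable {ι Ω : Type*} [MeasurableSpace Ω] {μ : Measure Ω} {υ : ι → Ω → ℝ}

theorem integral_sum_mul_sum_of_orthonormal (hL2 : ∀ k, MemLp (υ k) 2 μ)
    (hnorm : ∀ k, ∫ ω, υ k ω ^ 2 ∂μ = 1)
    (horth : ∀ k j, k ≠ j → ∫ ω, υ k ω * υ j ω ∂μ = 0) (s : Finset ι) (a b : ι → ℝ) :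
    ∫ ω, (∑ k ∈ s, a k * υ k ω) * (∑ j ∈ s, b j * υ j ω) ∂μ = ∑ k ∈ s, a k * b k := by
  have hint (k j : ι) : Integrable (fun ω => a k * b j * (υ k ω * υ j ω)) μ :=
    ((hL2 k).integrable_mul (hL2 j)).const_mul _
  calc ∫ ω, (∑ k ∈ s, a k * υ k ω) * (∑ j ∈ s, b j * υ j ω) ∂μ
      = ∫ ω, ∑ k ∈ s, ∑ j ∈ s, a k * b j * (υ k ω * υ j ω) ∂μ := by
        simp only [Finset.sum_mul_sum, mul_mul_mul_comm]
    _ = ∑ k ∈ s, ∑ j ∈ s, a k * b j * ∫ ω, υ k ω * υ j ω ∂μ := by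
        rw [integral_finsetSum _ fun k _ => integrable_finsetSum _ fun j _ => hint k j]
        refine Finset.sum_congr rfl fun k _ => ?_
        rw [integral_finsetSum _ fun j _ => hint k j]
        simp only [integral_const_mul]
    _ = ∑ k ∈ s, a k * b k := by
        refine Finset.sum_congr rfl fun k hk => ?_
        rw [Finset.sum_eq_single_of_mem k hk fun j _ hjk => by rw [horth k j hjk.symm, mul_zero]]
        simp only [← sq, hnorm, mul_one]

theorem integral_finsum_mul_finsum_of_orthonormal (hL2 : ∀ k, MemLp (υ k) 2 μ)
    (hnorm : ∀ k, ∫ ω, υ k ω ^ 2 ∂μ = 1)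
    (horth : ∀ k j, k ≠ j → ∫ ω, υ k ω * υ j ω ∂μ = 0) {a b : ι → ℝ}
    (ha : (Function.support a).Finite) (hb : (Function.support b).Finite) :
    ∫ ω, (∑ᶠ k, a k * υ k ω) * (∑ᶠ j, b j * υ j ω) ∂μ = ∑ᶠ k, a k * b k := by
  classical
  set s := ha.toFinset ∪ hb.toFinset
  have hsa : Function.support a ⊆ s := by simp [s]
  have hsb : Function.support b ⊆ s := by simp [s]
  have hA (ω : Ω) : ∑ᶠ k, a k * υ k ω = ∑ k ∈ s, a k * υ k ω :=
    finsum_eq_finsetSum_of_support_subset _ ((Function.support_mul_subset_left _ _).trans hsa)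
  have hB (ω : Ω) : ∑ᶠ j, b j * υ j ω = ∑ j ∈ s, b j * υ j ω :=
    finsum_eq_finsetSum_of_support_subset _ ((Function.support_mul_subset_left _ _).trans hsb)
  simp only [hA, hB]
  rw [finsum_eq_finsetSum_of_support_subset _ ((Function.support_mul_subset_left _ _).trans hsa)]
  exact integral_sum_mul_sum_of_orthonormal hL2 hnorm horth s a b

end Orthonormal

theorem Function.support_comp_sub_left_finite {G M : Type*} [AddGroup G] [Zero M] {f : G → M}
    (hf : (Function.support f).Finite) (c : G) : (Function.support fun k => f (c - k)).Finite :=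
  hf.preimage sub_right_injective.injOn

theorem nassar_noise_autocorrelation_general
    {Ω : Type*} [MeasurableSpace Ω] (μ : Measure Ω)
    (υ : ℤ → Ω → ℝ)
    (hL2 : ∀ k : ℤ, MemLp (υ k) 2 μ)
    (hvar : ∀ k : ℤ, ∫ ω, (υ k ω) ^ 2 ∂μ = 1)
    (huncorr : ∀ k j : ℤ, k ≠ j → ∫ ω, υ k ω * υ j ω ∂μ = 0)
    (h : ℕ → ℤ → ℝ)
    (hsupp : ∀ i : ℕ, (Function.support (h i)).Finite)
    (I : ℤ → ℕ)
    (w : ℤ → Ω → ℝ)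
    (hw : ∀ (n : ℤ) (ω : Ω), w n ω = ∑ᶠ l : ℤ, h (I n) (n - l) * υ l ω) :
    ∀ n l : ℤ,
      ∫ ω, w (n + l) ω * w n ω ∂μ
        = ∑ᶠ m : ℤ, h (I (n + l)) m * h (I n) (m - l) := by
  intro n l
  simp only [hw]
  rw [integral_finsum_mul_finsum_of_orthonormal hL2 hvar huncorr
    (Function.support_comp_sub_left_finite (hsupp _) _)
    (Function.support_comp_sub_left_finite (hsupp _) _),
    ← finsum_comp_equiv (Equiv.subLeft (n + l)) (f := fun m => h (I (n + l)) m * h (I n) (m - l))]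
  refine finsum_congr fun k => ?_
  rw [Equiv.subLeft_apply, sub_right_comm, add_sub_cancel_right]

/-- For the Nassar noise model `w(n) = ε_{I(n)}(n)` with
`ε_i(n) = Σ_l h_i(n−l) υ(l)`, where `υ` is a zero-mean unit-variance white process
and the filters `h_i` are finitely supported, the autocorrelation satisfies
`E[w(n+l) w(n)] = Σ_m h_{I(n+l)}(m) · h_{I(n)}(m − l)`. -/
theorem nassar_noise_autocorrelation
    {Ω : Type*} [MeasurableSpace Ω] (μ : Measure Ω) [IsProbabilityMeasure μ]
    (υ : ℤ → Ω → ℝ)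
    (hL2 : ∀ k : ℤ, MemLp (υ k) 2 μ)
    (hmean : ∀ k : ℤ, ∫ ω, υ k ω ∂μ = 0)
    (hvar : ∀ k : ℤ, ∫ ω, (υ k ω) ^ 2 ∂μ = 1)
    (huncorr : ∀ k j : ℤ, k ≠ j → ∫ ω, υ k ω * υ j ω ∂μ = 0)
    (M : ℕ) (hM : 0 < M)
    (h : ℕ → ℤ → ℝ)
    (hsupp : ∀ i : ℕ, (Function.support (h i)).Finite)
    (I : ℤ → ℕ) (hI : ∀ n : ℤ, 1 ≤ I n ∧ I n ≤ M)
    (w : ℤ → Ω → ℝ)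
    (hw : ∀ (n : ℤ) (ω : Ω), w n ω = ∑ᶠ l : ℤ, h (I n) (n - l) * υ l ω) :
    ∀ n l : ℤ,
      ∫ ω, w (n + l) ω * w n ω ∂μ
        = ∑ᶠ m : ℤ, h (I (n + l)) m * h (I n) (m - l) :=
  nassar_noise_autocorrelation_general μ υ hL2 hvar huncorr h hsupp I w hw
end

section
/- Let x, w, r : ℤ → ℝ be sequences, let L_isi, N_ch, L, N be positive integers with L ≥ L_isi, and let g : ℤ → ℤ → ℝ satisfy g(m + N_ch, l) = g(m, l) for all m, l, and suppose N_ch divides N and N ≥ L. Suppose the channel relation r(m) = Σ_{l=0}^{L_isi−1} g(m, l)·x(m − l) + w(m) holds for all m ∈ ℤ. Extend g by setting g(m,l) := 0 for l ≥ L_isi and for l < 0. Set M := N − L + 1 and define for each n ∈ ℤ: the N-dimensional vector x⃗[n] with (x⃗[n])_u := x(nN + u) for u ∈ {0,…,N−1}; the M-dimensional vectors r⃗[n] and w⃗[n] with (r⃗[n])_i := r(nN + L − 1 + i) and (w⃗[n])_i := w(nN + L − 1 + i) for i ∈ {0,…,M−1}; and the M × N matrix G with G_{u,v} := g(u + L −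 1, L − 1 − v + u) if 0 ≤ v − u < L and G_{u,v} := 0 otherwise. Then for every n ∈ ℤ, r⃗[n] = G · x⃗[n] + w⃗[n] (matrix–vector multiplication). -/
open MeasureTheory Matrix

set_option autoImplicit false

/-!
Row `i` of `G` vanishes outside the band of columns `i, …, i + L - 1`; read backwards, the band is
the impulse response `g (i + L - 1) ·`, so `(G x⃗[n])_i` is the channel sum at time
`nN + L - 1 + i`, truncated to lags `< L`. Since `N_ch ∣ N`, the impulse response at that time is the
one at `i + L - 1`, and the lags `L_isi ≤ l < L` contribute nothing.
-/

def dcdMatrix (g : ℤ → ℤ → ℝ) (L M N : ℕ) : Matrix (Fin M) (Fin N) ℝ :=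
  Matrix.of fun u v =>
    if ((u : ℕ) : ℤ) ≤ ((v : ℕ) : ℤ) ∧ ((v : ℕ) : ℤ) - ((u : ℕ) : ℤ) < (L : ℤ)
    then g (((u : ℕ) : ℤ) + (L : ℤ) - 1) ((L : ℤ) - 1 - ((v : ℕ) : ℤ) + ((u : ℕ) : ℤ))
    else 0

theorem Finset.sum_fin_band_eq_sum_range {R : Type*} [AddCommMonoid R] {N L i : ℕ}
    (h : i + L ≤ N) (φ : ℤ → R) :
    ∑ v : Fin N, (if (i : ℤ) ≤ ((v : ℕ) : ℤ) ∧ ((v : ℕ) : ℤ) - i < L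
      then φ (L - 1 - (v : ℕ) + i) else 0) = ∑ l ∈ range L, φ l := by
  classical
  have hband : (range N).filter (fun v : ℕ => (i : ℤ) ≤ v ∧ (v : ℤ) - i < L) = Ico i (i + L) := by
    ext v
    simp only [mem_filter, mem_range, mem_Ico]
    omega
  rw [Fin.sum_univ_eq_sum_range (fun v : ℕ => if (i : ℤ) ≤ v ∧ (v : ℤ) - i < L
      then φ (L - 1 - v + i) else 0), ← sum_filter, hband, sum_Ico_eq_sum_range,
    Nat.add_sub_cancel_left, ← sum_range_reflect]
  refine sum_congr rfl fun k hk => congrArg φ ?_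
  have := mem_range.mp hk
  omega

theorem dcdMatrix_mulVec_apply (g : ℤ → ℤ → ℝ) {L M N : ℕ} (x : ℤ → ℝ) (k : ℤ) (i : Fin M)
    (hi : (i : ℕ) + L ≤ N) :
    (dcdMatrix g L M N *ᵥ fun v : Fin N => x (k + (v : ℕ))) i =
      ∑ l ∈ Finset.range L, g ((i : ℕ) + L - 1) l * x (k + L - 1 + (i : ℕ) - l) := by
  rw [mulVec, dotProduct, ← Finset.sum_fin_band_eq_sum_range hi
    fun l : ℤ => g ((i : ℕ) + L - 1) l * x (k + L - 1 + (i : ℕ) - l)]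
  refine Finset.sum_congr rfl fun v _ => ?_
  simp only [dcdMatrix, of_apply, ite_mul, zero_mul]
  congr 3
  ring

theorem Function.Periodic.apply_add_int_mul_of_dvd {β : Type*} {f : ℤ → β} {P : ℕ} {N : ℕ}
    (hf : Function.Periodic f P) (hdvd : P ∣ N) (m n : ℤ) : f (m + n * N) = f m := by
  obtain ⟨c, rfl⟩ := hdvd
  have hc : Function.Periodic f ((P * c : ℕ) : ℤ) := by
    rw [Nat.cast_mul, mul_comm]
    exact hf.nat_mul c
  simpa using hc.int_mul n m

theorem lptv_channel_dcd_mimo_representation_general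
    (x w r : ℤ → ℝ) (Lisi Nch L N : ℕ)
    (hLge : Lisi ≤ L) (hdvd : Nch ∣ N) (hLN : L ≤ N)
    (g : ℤ → ℤ → ℝ)
    (hper : ∀ m l : ℤ, g (m + (Nch : ℤ)) l = g m l)
    (hzero : ∀ m l : ℤ, (l < 0 ∨ (Lisi : ℤ) ≤ l) → g m l = 0)
    (hch : ∀ m : ℤ, r m = (∑ l ∈ Finset.range Lisi, g m ((l : ℤ)) * x (m - (l : ℤ))) + w m)
    (M : ℕ) (hM : M = N - L + 1)
    (G : Matrix (Fin M) (Fin N) ℝ)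
    (hG : ∀ (u : Fin M) (v : Fin N),
      G u v =
        if ((u : ℕ) : ℤ) ≤ ((v : ℕ) : ℤ) ∧ ((v : ℕ) : ℤ) - ((u : ℕ) : ℤ) < (L : ℤ)
        then g (((u : ℕ) : ℤ) + (L : ℤ) - 1)
               ((L : ℤ) - 1 - ((v : ℕ) : ℤ) + ((u : ℕ) : ℤ))
        else 0) :
    ∀ (n : ℤ) (i : Fin M),
      r (n * (N : ℤ) + (L : ℤ) - 1 + ((i : ℕ) : ℤ)) =
        G.mulVec (fun v : Fin N => x (n * (N : ℤ) + ((v : ℕ) : ℤ))) i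
          + w (n * (N : ℤ) + (L : ℤ) - 1 + ((i : ℕ) : ℤ)) := by
  intro n i
  have hG_eq : G = dcdMatrix g L M N := Matrix.ext hG
  have hi : (i : ℕ) + L ≤ N := by omega
  have hperiod (l : ℤ) : g (n * N + L - 1 + (i : ℕ)) l = g ((i : ℕ) + L - 1) l := by
    rw [← Function.Periodic.apply_add_int_mul_of_dvd (f := (g · l)) (fun m => hper m l) hdvd
      ((i : ℕ) + L - 1) n]
    ring_nf
  have htail : ∀ l ∈ Finset.range L, l ∉ Finset.range Lisi →
      g (n * N + L - 1 + (i : ℕ)) l * x (n * N + L - 1 + (i : ℕ) - l) = 0 := by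
    intro l _ hl
    rw [hzero _ _ (Or.inr (by simpa using hl)), zero_mul]
  rw [hch, hG_eq, dcdMatrix_mulVec_apply g x _ i hi,
    Finset.sum_subset (Finset.range_subset_range.mpr hLge) htail]
  simp only [hperiod]

/-- Applying the decimated components decomposition with block length
`N` to an LPTV channel `r(m) = Σ_{l<L_isi} g(m,l) x(m−l) + w(m)` (period `N_ch ∣ N`,
memory `L_isi ≤ L ≤ N`), and discarding the first `L−1` outputs of each block,
yields the memoryless MIMO relation `r⃗[n] = G · x⃗[n] + w⃗[n]`, where
`G_{u,v} = g(u+L−1, L−1−v+u)` for `0 ≤ v−u < L` and `0` otherwise. -/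
theorem lptv_channel_dcd_mimo_representation
    (x w r : ℤ → ℝ) (Lisi Nch L N : ℕ)
    (hLisi : 0 < Lisi) (hNch : 0 < Nch) (hLpos : 0 < L) (hNpos : 0 < N)
    (hLge : Lisi ≤ L) (hdvd : Nch ∣ N) (hLN : L ≤ N)
    (g : ℤ → ℤ → ℝ)
    (hper : ∀ m l : ℤ, g (m + (Nch : ℤ)) l = g m l)
    (hzero : ∀ m l : ℤ, (l < 0 ∨ (Lisi : ℤ) ≤ l) → g m l = 0)
    (hch : ∀ m : ℤ, r m = (∑ l ∈ Finset.range Lisi, g m ((l : ℤ)) * x (m - (l : ℤ))) + w m)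
    (M : ℕ) (hM : M = N - L + 1)
    (G : Matrix (Fin M) (Fin N) ℝ)
    (hG : ∀ (u : Fin M) (v : Fin N),
      G u v =
        if ((u : ℕ) : ℤ) ≤ ((v : ℕ) : ℤ) ∧ ((v : ℕ) : ℤ) - ((u : ℕ) : ℤ) < (L : ℤ)
        then g (((u : ℕ) : ℤ) + (L : ℤ) - 1)
               ((L : ℤ) - 1 - ((v : ℕ) : ℤ) + ((u : ℕ) : ℤ))
        else 0) :
    ∀ (n : ℤ) (i : Fin M),
      r (n * (N : ℤ) + (L : ℤ) - 1 + ((i : ℕ) : ℤ)) =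
        G.mulVec (fun v : Fin N => x (n * (N : ℤ) + ((v : ℕ) : ℤ))) i
          + w (n * (N : ℤ) + (L : ℤ) - 1 + ((i : ℕ) : ℤ)) :=
  lptv_channel_dcd_mimo_representation_general x w r Lisi Nch L N hLge hdvd hLN g hper hzero hch M
    hM G hG
end

section
/- Let G be a real M × N matrix, let V be a real orthogonal N × N matrix, and let λ_0, …, λ_{N−1} ≥ 0 be such that Gᵀ G = V Λ Vᵀ, where Λ is the diagonal matrix with entries λ_k. Fix Δ > 0 and let D be the diagonal N × N matrix with D_{k,k} := max(0, Δ − λ_k⁻¹) if λ_k > 0 and D_{k,k} := 0 if λ_k = 0 (the water-filling power allocation). Then det(I_M + G·(V D Vᵀ)·Gᵀ) = ∏_{k=0}^{N−1} max(1, Δ·λ_k); equivalently, log₂ det(I_M + G (V D Vᵀ) Gᵀ) = Σ_{k=0}^{N−1} max(0, log₂(Δ·λ_k)). -/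
/-!
Sylvester's identity `det (1 + A B) = det (1 + B A)` moves the problem from `M × M` to `N × N`,
turning `det (1 + G C Gᵀ)` into `det (1 + C Gᵀ G)`. With `C = V D Vᵀ` and `Gᵀ G = V Λ Vᵀ`,
orthogonality of `V` collapses this to `det (1 + D Λ) = ∏ₖ (1 + Dₖ λₖ)`, and each water-filling
factor `1 + (Δ - λₖ⁻¹)⁺ λₖ` equals `max 1 (Δ λₖ)`. Taking `log₂` factor by factor gives the
second form, since `log₂` is monotone on the positive reals and `Δ λₖ ≥ 0`.
-/

open Matrix

noncomputable def waterFilling (Δ l : ℝ) : ℝ :=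
  if 0 < l then max 0 (Δ - l⁻¹) else 0

theorem one_add_waterFilling_mul {Δ : ℝ} (hΔ : 0 ≤ Δ) (l : ℝ) :
    1 + waterFilling Δ l * l = max 1 (Δ * l) := by
  unfold waterFilling
  split_ifs with hl
  · have hΔl : (Δ - l⁻¹) * l = Δ * l - 1 := by field_simp
    rcases le_total (Δ - l⁻¹) 0 with h | h
    · have : Δ * l ≤ 1 := by nlinarith
      rw [max_eq_left h, max_eq_left this, zero_mul, add_zero]
    · have : 1 ≤ Δ * l := by nlinarith
      rw [max_eq_right h, max_eq_right this, hΔl]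
      ring
  · have : Δ * l ≤ 1 := by nlinarith
    rw [max_eq_left this, zero_mul, add_zero]

theorem Real.logb_max_one {b x : ℝ} (hb : 1 < b) (hx : 0 ≤ x) :
    Real.logb b (max 1 x) = max 0 (Real.logb b x) := by
  rcases le_total x 1 with h | h
  · rw [max_eq_left h, Real.logb_one, max_eq_left (Real.logb_nonpos hb hx h)]
  · rw [max_eq_right h, max_eq_right (Real.logb_nonneg hb h)]

section OrthogonalConj

variable {n R : Type*} [Fintype n] [DecidableEq n] [CommRing R]

theorem Matrix.conj_mul_conj_of_transpose_mul_self {V : Matrix n n R} (hV : Vᵀ * V = 1)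
    (A B : Matrix n n R) : V * A * Vᵀ * (V * B * Vᵀ) = V * (A * B) * Vᵀ := by
  calc V * A * Vᵀ * (V * B * Vᵀ) = V * A * (Vᵀ * V) * B * Vᵀ := by simp only [Matrix.mul_assoc]
    _ = V * (A * B) * Vᵀ := by rw [hV, Matrix.mul_one]; simp only [Matrix.mul_assoc]

theorem Matrix.det_one_add_conj_of_mul_transpose {V : Matrix n n R} (hV : V * Vᵀ = 1)
    (A : Matrix n n R) : (1 + V * A * Vᵀ).det = (1 + A).det := by
  have hconj : 1 + V * A * Vᵀ = V * (1 + A) * Vᵀ := by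
    rw [Matrix.mul_add, Matrix.add_mul, Matrix.mul_one, hV]
  rw [hconj, det_mul, det_mul, mul_right_comm, ← det_mul, hV, det_one, one_mul]

end OrthogonalConj

/-- For the water-filling input covariance `C_xx = V D Vᵀ` built on the
eigendecomposition `Gᵀ G = V Λ Vᵀ` with water level `Δ > 0`,
`det(I + G (V D Vᵀ) Gᵀ) = ∏_k max(1, Δ λ_k)`, equivalently
`log₂ det(I + G (V D Vᵀ) Gᵀ) = Σ_k max(0, log₂(Δ λ_k))`. -/
theorem waterfilling_det_identity
    (M N : ℕ) (G : Matrix (Fin M) (Fin N) ℝ)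
    (V : Matrix (Fin N) (Fin N) ℝ)
    (hV : V * Vᵀ = 1 ∧ Vᵀ * V = 1)
    (lam : Fin N → ℝ) (hlam : ∀ k, 0 ≤ lam k)
    (hGram : Gᵀ * G = V * Matrix.diagonal lam * Vᵀ)
    (Δ : ℝ) (hΔ : 0 < Δ)
    (D : Matrix (Fin N) (Fin N) ℝ)
    (hD : D = Matrix.diagonal (fun k => if 0 < lam k then max 0 (Δ - (lam k)⁻¹) else 0)) :
    ((1 : Matrix (Fin M) (Fin M) ℝ) + G * (V * D * Vᵀ) * Gᵀ).det
        = ∏ k : Fin N, max 1 (Δ * lam k)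
    ∧ Real.logb 2 (((1 : Matrix (Fin M) (Fin M) ℝ) + G * (V * D * Vᵀ) * Gᵀ).det)
        = ∑ k : Fin N, max 0 (Real.logb 2 (Δ * lam k)) := by
  have hdet : ((1 : Matrix (Fin M) (Fin M) ℝ) + G * (V * D * Vᵀ) * Gᵀ).det
      = ∏ k : Fin N, max 1 (Δ * lam k) := by
    calc ((1 : Matrix (Fin M) (Fin M) ℝ) + G * (V * D * Vᵀ) * Gᵀ).det
        = (1 + V * D * Vᵀ * (Gᵀ * G)).det := by
          rw [Matrix.mul_assoc, det_one_add_mul_comm, Matrix.mul_assoc]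
      _ = (1 + D * diagonal lam).det := by
          rw [hGram, conj_mul_conj_of_transpose_mul_self hV.2,
            det_one_add_conj_of_mul_transpose hV.1]
      _ = ∏ k, max 1 (Δ * lam k) := by
          rw [hD, diagonal_mul_diagonal, ← diagonal_one, diagonal_add, det_diagonal]
          exact Finset.prod_congr rfl fun k _ => one_add_waterFilling_mul hΔ.le (lam k)
  refine ⟨hdet, ?_⟩
  rw [hdet, Real.logb_prod _ _ fun k _ => by positivity]
  exact Finset.sum_congr rfl fun k _ => Real.logb_max_one one_lt_two (mul_nonneg hΔ.le (hlam k))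
end

section
/- Let N be a positive integer, let λ_0, …, λ_{N−1} be strictly positive reals, and let P > 0. Then there exists a unique real number Δ such that Σ_{k=0}^{N−1} max(0, Δ − λ_k⁻¹) = P; moreover this Δ satisfies Δ > min_k λ_k⁻¹ > 0. -/
set_option autoImplicit false

/-- For strictly positive eigenvalues `λ_0,…,λ_{N−1}` and power budget
`P > 0`, the water-filling equation `Σ_k max(0, Δ − λ_k⁻¹) = P` has a unique
solution `Δ`, and this solution satisfies `Δ > min_k λ_k⁻¹ > 0`. -/
theorem waterfilling_level_exists_unique
    (N : ℕ) (hN : 0 < N)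
    (lam : Fin N → ℝ) (hlam : ∀ k, 0 < lam k)
    (P : ℝ) (hP : 0 < P) :
    (∃! Δ : ℝ, ∑ k : Fin N, max 0 (Δ - (lam k)⁻¹) = P) ∧
    (∀ Δ : ℝ, (∑ k : Fin N, max 0 (Δ - (lam k)⁻¹) = P) →
      (Finset.univ.inf' ⟨⟨0, hN⟩, Finset.mem_univ _⟩ (fun k => (lam k)⁻¹)) < Δ ∧
      0 < Finset.univ.inf' ⟨⟨0, hN⟩, Finset.mem_univ _⟩ (fun k => (lam k)⁻¹)) := by
  set c : Fin N → ℝ := fun k => (lam k)⁻¹ with hc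
  have hne : (Finset.univ : Finset (Fin N)).Nonempty := ⟨⟨0, hN⟩, Finset.mem_univ _⟩
  set m : ℝ := Finset.univ.inf' ⟨⟨0, hN⟩, Finset.mem_univ _⟩ c with hm
  set f : ℝ → ℝ := fun Δ => ∑ k : Fin N, max 0 (Δ - c k) with hf
  have hmle : ∀ k : Fin N, m ≤ c k := fun k =>
    Finset.inf'_le _ (Finset.mem_univ k)
  obtain ⟨k0, -, hk0⟩ := Finset.exists_mem_eq_inf' hne c
  -- f vanishes at or below m
  have hzero : ∀ Δ : ℝ, Δ ≤ m → f Δ = 0 := by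
    intro Δ hΔ
    refine Finset.sum_eq_zero fun k _ => ?_
    have : Δ - c k ≤ 0 := by linarith [hmle k]
    simp [max_eq_left this]
  -- strict monotone on Ici m
  have hsm : StrictMonoOn f (Set.Ici m) := by
    intro a ha b hb hab
    refine Finset.sum_lt_sum (fun k _ => max_le_max le_rfl (by linarith)) ⟨k0, Finset.mem_univ _, ?_⟩
    have hck0 : c k0 = m := hk0.symm
    have h1 : max 0 (a - c k0) = a - c k0 := max_eq_right (by rw [hck0]; linarith [Set.mem_Ici.mp ha])
    have h2 : max 0 (b - c k0) = b - c k0 := max_eq_right (by rw [hck0]; linarith [Set.mem_Ici.mp hb])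
    rw [h1, h2]; linarith
  -- continuity
  have hcont : Continuous f := by
    apply continuous_finset_sum
    intro k _
    exact continuous_const.max (continuous_id.sub continuous_const)
  -- f (m + P) ≥ P
  have hbig : P ≤ f (m + P) := by
    have : ∀ k ∈ Finset.univ, (0:ℝ) ≤ max 0 (m + P - c k) := fun k _ => le_max_left _ _
    calc P = max 0 (m + P - c k0) := by
            rw [max_eq_right (by rw [← hk0]; linarith)]; rw [← hk0]; ring
      _ ≤ f (m + P) := Finset.single_le_sum this (Finset.mem_univ k0)
  -- existence via IVT
  have hiv : ∃ Δ ∈ Set.Icc m (m + P), f Δ = P := by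
    have := intermediate_value_Icc (by linarith : m ≤ m + P) hcont.continuousOn
    exact (Set.mem_image _ _ _).mp (this ⟨by rw [hzero m le_rfl]; exact hP.le, hbig⟩)
  obtain ⟨Δ0, hΔ0mem, hΔ0⟩ := hiv
  -- any solution lies above m
  have habove : ∀ Δ : ℝ, f Δ = P → m < Δ := by
    intro Δ hΔ
    by_contra h
    push_neg at h
    rw [hzero Δ h] at hΔ
    linarith
  have hmpos : 0 < m := Finset.lt_inf'_iff _ |>.mpr fun k _ => inv_pos.mpr (hlam k)
  refine ⟨⟨Δ0, hΔ0, ?_⟩, fun Δ hΔ => ⟨habove Δ hΔ, hmpos⟩⟩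
  intro Δ hΔ
  exact hsm.injOn (Set.mem_Ici.mpr (habove Δ hΔ).le)
    (Set.mem_Ici.mpr (habove Δ0 hΔ0).le) (hΔ.trans hΔ0.symm)
end

section
/- Let x, w, r : ℤ → ℝ be sequences, let L_isi, N_ch, L, N₀ be positive integers with L ≥ L_isi and N₀ ≥ L, let g : ℤ → ℤ → ℝ satisfy g(m + N_ch, l) = g(m, l) for all m, l, with N_ch dividing N₀, and extend g by g(m,l) := 0 for l < 0 or l ≥ L_isi. Suppose r(m) = Σ_{l=0}^{L_isi−1} g(m, l)·x(m − l) + w(m) for all m ∈ ℤ. Define for each n ∈ ℤ the N₀-dimensional vectors x̃[n], r̃[n], w̃[n] by (x̃[n])_i := x(nN₀ + i), (r̃[n])_i := r(nN₀ + i), (w̃[n])_i := w(nN₀ + i), i ∈ {0,…,N₀−1}, and the N₀ × N₀ matrices H[0], H[1] by (H[0])_{u,v} := g(u, u − v) if 0 ≤ u − v < L and 0 otherwise, and (H[1])_{u,v} := g(u, N₀ + u − v) if 1 − N₀ ≤ u − v < L − N₀ and 0 otherwise. Then for every n ∈ ℤ, r̃[n] = H[0]·x̃[n] + H[1]·x̃[n−1]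 + w̃[n]. -/
open Matrix

set_option autoImplicit false

/-! Since `N_ch ∣ N₀`, the channel taps seen at `m = nN₀ + i` are those at `i`, so each
output block is a fixed filter applied to the input. Of the `N₀` lags that can matter, the
lags `l ≤ i` reach back into the current input block, at position `i - l`, and the lags
`l > i` into the previous one, at position `N₀ + i - l`: these two families of coefficients
are the rows of `H[0]` and `H[1]`. -/

open Finset in
theorem sum_range_lag_eq_sum_fin_add_sum_fin {R : Type*} [Semiring R] {N : ℕ} (i : Fin N)
    (a : ℤ) (c y : ℤ → R) :
    ∑ l ∈ range N, c l * y (a + i - l) =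
      ∑ v : Fin N, (if v ≤ i then c ((i : ℤ) - v) else 0) * y (a + v)
        + ∑ v : Fin N, (if i < v then c ((N : ℤ) + i - v) else 0) * y (a - N + v) := by
  have : NeZero N := NeZero.of_pos i.pos
  rw [← Fin.sum_univ_eq_sum_range (fun l : ℕ => c l * y (a + i - l)), ← sum_add_distrib]
  refine Fintype.sum_equiv (Equiv.subLeft i) _ _ fun l => ?_
  rcases le_or_gt l i with hl | hl
  · have hv : (((i - l : Fin N) : ℕ) : ℤ) = i - l := by
      rw [Fin.coe_sub_iff_le.mpr hl]; omega
    have hle : i - l ≤ i := by rw [Fin.le_def]; omega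
    rw [Equiv.subLeft_apply, if_pos hle, if_neg (not_lt.mpr hle), hv, zero_mul, add_zero]
    congr 2 <;> ring
  · have hv : (((i - l : Fin N) : ℕ) : ℤ) = N + i - l := by
      rw [Fin.coe_sub_iff_lt.mpr hl]; omega
    have hlt : i < i - l := by rw [Fin.lt_def]; omega
    rw [Equiv.subLeft_apply, if_neg (not_le.mpr hlt), if_pos hlt, hv, zero_mul, zero_add]
    congr 2 <;> ring

theorem Function.Periodic.int_mul_add_of_dvd {β : Type*} {f : ℤ → β} {p N : ℕ}
    (hf : Function.Periodic f p) (hpN : p ∣ N) (n a : ℤ) : f (n * N + a) = f a := by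
  obtain ⟨k, rfl⟩ := hpN
  have := hf.int_mul (n * k) a
  rwa [Int.cast_id, show a + n * k * p = n * ↑(p * k) + a by push_cast; ring] at this

theorem lptv_channel_dcd_two_tap_mimo_general
    (x w r : ℤ → ℝ) (Lisi Nch L N0 : ℕ)
    (hLge : Lisi ≤ L) (hN0L : L ≤ N0) (hdvd : Nch ∣ N0)
    (g : ℤ → ℤ → ℝ)
    (hper : ∀ m l : ℤ, g (m + (Nch : ℤ)) l = g m l)
    (hzero : ∀ m l : ℤ, (l < 0 ∨ (Lisi : ℤ) ≤ l) → g m l = 0)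
    (hch : ∀ m : ℤ, r m = (∑ l ∈ Finset.range Lisi, g m ((l : ℤ)) * x (m - (l : ℤ))) + w m)
    (H0 H1 : Matrix (Fin N0) (Fin N0) ℝ)
    (hH0 : ∀ u v : Fin N0, H0 u v =
      if ((v : ℕ) : ℤ) ≤ ((u : ℕ) : ℤ) ∧ ((u : ℕ) : ℤ) - ((v : ℕ) : ℤ) < (L : ℤ)
      then g ((u : ℕ) : ℤ) (((u : ℕ) : ℤ) - ((v : ℕ) : ℤ))
      else 0)
    (hH1 : ∀ u v : Fin N0, H1 u v =
      if 1 - (N0 : ℤ) ≤ ((u : ℕ) : ℤ) - ((v : ℕ) : ℤ) ∧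
          ((u : ℕ) : ℤ) - ((v : ℕ) : ℤ) < (L : ℤ) - (N0 : ℤ)
      then g ((u : ℕ) : ℤ) ((N0 : ℤ) + ((u : ℕ) : ℤ) - ((v : ℕ) : ℤ))
      else 0) :
    ∀ (n : ℤ) (i : Fin N0),
      r (n * (N0 : ℤ) + ((i : ℕ) : ℤ)) =
        H0.mulVec (fun v : Fin N0 => x (n * (N0 : ℤ) + ((v : ℕ) : ℤ))) i
          + H1.mulVec (fun v : Fin N0 => x ((n - 1) * (N0 : ℤ) + ((v : ℕ) : ℤ))) i
          + w (n * (N0 : ℤ) + ((i : ℕ) : ℤ)) := by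
  intro n i
  -- the cut-off at `L` is invisible on nonnegative lags (as `L_isi ≤ L`) and is how `H0`, `H1` read `g`
  let c : ℤ → ℝ := fun l => if l < L then g i l else 0
  have htaps : g (n * N0 + i) = g i :=
    (Function.Periodic.int_mul_add_of_dvd (fun m => funext (hper m)) hdvd) n i
  have hsum : ∑ l ∈ Finset.range Lisi, g (n * N0 + i) l * x (n * N0 + i - l)
      = ∑ l ∈ Finset.range N0, c l * x (n * N0 + i - l) := by
    refine Finset.sum_subset_zero_on_sdiff (Finset.range_subset_range.mpr (hLge.trans hN0L))
      (fun l hl => ?_) (fun l _ => ?_)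
    · rw [Finset.mem_sdiff, Finset.mem_range, Finset.mem_range] at hl
      simp [c, hzero i l (Or.inr (by omega))]
    · by_cases hl : (l : ℤ) < L
      · simp [c, htaps, hl]
      · simp [c, htaps, hl, hzero i l (Or.inr (by omega))]
  have hrow0 : ∀ v, H0 i v = if v ≤ i then c ((i : ℤ) - v) else 0 := fun v => by
    rw [hH0]; simp only [c, Fin.le_def]; split_ifs <;> first | rfl | omega
  have hrow1 : ∀ v, H1 i v = if i < v then c ((N0 : ℤ) + i - v) else 0 := fun v => by
    rw [hH1]; simp only [c, Fin.lt_def]; split_ifs <;> first | rfl | omega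
  rw [hch, hsum, sum_range_lag_eq_sum_fin_add_sum_fin]
  simp only [mulVec, dotProduct, hrow0, hrow1, sub_one_mul]

/-- Applying the decimated components decomposition with block length
`N₀` (a multiple of the channel period `N_ch`, with `N₀ ≥ L ≥ L_isi`) to the LPTV
channel `r(m) = Σ_{l<L_isi} g(m,l) x(m−l) + w(m)` yields the two-tap multivariate
LTI representation `r̃[n] = H[0] x̃[n] + H[1] x̃[n−1] + w̃[n]`. -/
theorem lptv_channel_dcd_two_tap_mimo
    (x w r : ℤ → ℝ) (Lisi Nch L N0 : ℕ)
    (hLisi : 0 < Lisi) (hNch : 0 < Nch) (hLpos : 0 < L) (hN0 : 0 < N0)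
    (hLge : Lisi ≤ L) (hN0L : L ≤ N0) (hdvd : Nch ∣ N0)
    (g : ℤ → ℤ → ℝ)
    (hper : ∀ m l : ℤ, g (m + (Nch : ℤ)) l = g m l)
    (hzero : ∀ m l : ℤ, (l < 0 ∨ (Lisi : ℤ) ≤ l) → g m l = 0)
    (hch : ∀ m : ℤ, r m = (∑ l ∈ Finset.range Lisi, g m ((l : ℤ)) * x (m - (l : ℤ))) + w m)
    (H0 H1 : Matrix (Fin N0) (Fin N0) ℝ)
    (hH0 : ∀ u v : Fin N0, H0 u v =
      if ((v : ℕ) : ℤ) ≤ ((u : ℕ) : ℤ) ∧ ((u : ℕ) : ℤ) - ((v : ℕ) : ℤ) < (L : ℤ)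
      then g ((u : ℕ) : ℤ) (((u : ℕ) : ℤ) - ((v : ℕ) : ℤ))
      else 0)
    (hH1 : ∀ u v : Fin N0, H1 u v =
      if 1 - (N0 : ℤ) ≤ ((u : ℕ) : ℤ) - ((v : ℕ) : ℤ) ∧
          ((u : ℕ) : ℤ) - ((v : ℕ) : ℤ) < (L : ℤ) - (N0 : ℤ)
      then g ((u : ℕ) : ℤ) ((N0 : ℤ) + ((u : ℕ) : ℤ) - ((v : ℕ) : ℤ))
      else 0) :
    ∀ (n : ℤ) (i : Fin N0),
      r (n * (N0 : ℤ) + ((i : ℕ) : ℤ)) =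
        H0.mulVec (fun v : Fin N0 => x (n * (N0 : ℤ) + ((v : ℕ) : ℤ))) i
          + H1.mulVec (fun v : Fin N0 => x ((n - 1) * (N0 : ℤ) + ((v : ℕ) : ℤ))) i
          + w (n * (N0 : ℤ) + ((i : ℕ) : ℤ)) :=
  lptv_channel_dcd_two_tap_mimo_general x w r Lisi Nch L N0 hLge hN0L hdvd g hper hzero hch H0 H1
    hH0 hH1
end
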